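/- arXiv:1605.04063 — 2 statements merged into one kernel-verified Lean document; each statement's English description precedes it below -/
import Mathlib

section
/- Let q be a prime power, m₁ | m, m₂ | m with gcd(m₁, m₂) = 1 and gcd(m₁, q-1) = 1, and define Ω(b) = ∑_{x ∈ F_{q^m}^*} ∑_{y,z ∈ F_q^*} χ₁(y b x^{(q^m-1)/(q^{m₁}-1)}) χ₂(z x^{(q^m-1)/(q^{m₂}-1)}) χ(z) for b ∈ F_{q^{m₁}}^*, where χ, χ₁, χ₂ are the canonical additive characters of F_q, F_{q^{m₁}}, F_{q^{m₂}}. Then Ω(b) = -(q^m - 1)(q - 1)/((q^{m₁} - 1)(q^{m₂} - 1)) for every b ∈ F_{q^{m₁}}^*. -/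
/-!
Write the sum as `∑ₓ A(N₁ x) B(N₂ x)` with `A u = ∑_y χ₁(y b u)` and `B v = ∑_z χ₂(z v) χ(z)`.
Averaging over the substitutions `x ↦ x z^(q^{m₂}-1)`, which fix `N₂ x`, shows that the sum is
`|F_{q^m}ˣ|⁻¹ ∑ₓ B(N₂ x)` times `∑_z A(u N₁(z)^(q^{m₂}-1))`, as soon as the latter does not depend
on `u`. The index `(q^{m₁}-1)/(q-1)` of `F_qˣ` in `F_{q^{m₁}}ˣ` is prime to `q^{m₂}-1` because
`gcd(m₁, m₂) = gcd(m₁, q-1) = 1`, so `(y, z) ↦ y N₁(z)^(q^{m₂}-1)` maps onto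
`F_{q^{m₁}}ˣ` with fibres of equal size, and that sum is a multiple of `∑_{w ≠ 0} χ₁(w) = -1`.
Likewise `∑_v B(v) = (-1)(-1) = 1`, the second `-1` being the sum of `χ` over `F_qˣ`.
-/

open Finset

lemma AddChar.sum_units_mul_eq_neg_one {E R : Type*} [Field E] [Fintype E] [DecidableEq E]
    [CommRing R] [IsDomain R] {ψ : AddChar E R} (hψ : ψ ≠ 1) {c : E} (hc : c ≠ 0) :
    ∑ v : Eˣ, ψ (c * v) = -1 := by
  have hsum : ∑ x : E, ψ (x * c) = 0 := by
    simpa [hc] using sum_mulShift c (IsPrimitive.of_ne_one hψ)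
  have hunits : ∑ v : Eˣ, ψ (c * v) = ∑ x ∈ {0}ᶜ, ψ (x * c) := by
    have hval : univ.map ⟨((↑) : Eˣ → E), Units.val_injective⟩ = {0}ᶜ := by
      ext x
      simp only [mem_map, mem_univ, true_and, mem_compl, mem_singleton, Function.Embedding.coeFn_mk]
      exact isUnit_iff_ne_zero
    rw [← hval, sum_map]
    simp_rw [mul_comm c]
    rfl
  rw [← sum_compl_add_sum {0}, sum_singleton, zero_mul, map_zero_eq_one] at hsum
  linear_combination hunits + hsum

lemma MonoidHom.sum_comp_of_surjective {G H M : Type*} [Group G] [Fintype G] [Group H]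
    [Fintype H] [AddCommMonoid M] {φ : G →* H} (hφ : Function.Surjective φ) (f : H → M) :
    ∑ g, f (φ g) = Nat.card φ.ker • ∑ h, f h := by
  classical
  have hfiber (h : H) : #{g | φ g = h} = Nat.card φ.ker := by
    rw [card_fiber_eq_of_mem_range φ (hφ h) ⟨1, map_one φ⟩, Nat.card_eq_fintype_card,
      Fintype.card_subtype]
    simp [mem_ker]
  rw [← sum_fiberwise univ φ, smul_sum]
  refine sum_congr rfl fun h _ => ?_
  rw [sum_congr rfl fun g hg => by rw [(mem_filter.1 hg).2], sum_const, hfiber]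

lemma MonoidHom.card_eq_card_ker_mul_of_surjective {G H : Type*} [Group G] [Group H]
    {φ : G →* H} (hφ : Function.Surjective φ) :
    Nat.card G = Nat.card φ.ker * Nat.card H := by
  rw [← φ.ker.card_mul_index, Subgroup.index_ker, φ.range_eq_top.2 hφ, Subgroup.card_top]

lemma MonoidHom.sum_comp_of_surjective_eq_div {G H R : Type*} [Group G] [Fintype G] [Group H]
    [Fintype H] [DivisionRing R] [CharZero R] {φ : G →* H} (hφ : Function.Surjective φ)
    (f : H → R) : ∑ g, f (φ g) = (Nat.card G / Nat.card H : R) * ∑ h, f h := by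
  rw [φ.sum_comp_of_surjective hφ, card_eq_card_ker_mul_of_surjective hφ, nsmul_eq_mul,
    Nat.cast_mul, mul_div_cancel_right₀ _ (Nat.cast_ne_zero.2 Nat.card_pos.ne')]

lemma Subgroup.exists_mem_mul_pow_of_coprime_index {G : Type*} [CommGroup G] {S : Subgroup G}
    {e : ℕ} (he : S.index.Coprime e) (g : G) : ∃ s ∈ S, ∃ w, s * w ^ e = g := by
  obtain ⟨w, hw⟩ := QuotientGroup.mk_surjective ((powCoprime he).symm g)
  have hpow : ((w ^ e : G) : G ⧸ S) = g := by
    rw [QuotientGroup.mk_pow, hw]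
    exact (powCoprime he).apply_symm_apply _
  refine ⟨g * (w ^ e)⁻¹, ?_, w, inv_mul_cancel_right g _⟩
  rw [mul_comm]
  exact QuotientGroup.eq.1 hpow

lemma card_mul_sum_mul_eq_of_forall_sum_eq {G G' G₁ G₂ R : Type*} [Group G] [Fintype G]
    [Fintype G'] [Group G₁] [Group G₂] [CommRing R] (φ₁ : G →* G₁) (φ₂ : G →* G₂)
    {s : G' → G} (hs : ∀ z, φ₂ (s z) = 1) (A : G₁ → R) (B : G₂ → R) {c : R}
    (hA : ∀ u, ∑ z, A (u * φ₁ (s z)) = c) :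
    Nat.card G' * ∑ x, A (φ₁ x) * B (φ₂ x) = c * ∑ x, B (φ₂ x) := by
  have htranslate (z : G') : ∑ x, A (φ₁ x) * B (φ₂ x) = ∑ x, A (φ₁ x * φ₁ (s z)) * B (φ₂ x) := by
    rw [← Equiv.sum_comp (Equiv.mulRight (s z))]
    simp [hs]
  calc (Nat.card G' : R) * ∑ x, A (φ₁ x) * B (φ₂ x)
      = ∑ z : G', ∑ x, A (φ₁ x * φ₁ (s z)) * B (φ₂ x) := by
        simp_rw [← htranslate, sum_const, card_univ, nsmul_eq_mul, Nat.card_eq_fintype_card]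
    _ = c * ∑ x, B (φ₂ x) := by
        simp_rw [sum_comm (γ := G'), ← sum_mul, hA, mul_sum]

lemma Nat.coprime_pow_sub_one_div_sub_one {q m₁ m₂ : ℕ} (hq : 2 ≤ q) (hgcd : m₁.gcd m₂ = 1)
    (hl : m₁.gcd (q - 1) = 1) : ((q ^ m₁ - 1) / (q - 1)).Coprime (q ^ m₂ - 1) := by
  set k := (q ^ m₁ - 1) / (q - 1) with hk
  have hk_dvd : k ∣ q ^ m₁ - 1 := Nat.div_dvd_of_dvd (sub_one_dvd_pow_sub_one q m₁)
  have hk_mod : k ≡ m₁ [MOD q - 1] := by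
    rw [hk, ← Nat.geomSum_eq hq]
    have hq1 : q ≡ 1 [MOD q - 1] := Nat.modEq_sub (by omega)
    simpa using Nat.ModEq.sum (s := range m₁) fun i _ => hq1.pow i
  have hk_cop : k.Coprime (q - 1) := hk_mod.gcd_eq.trans hl
  have hdvd : k.gcd (q ^ m₂ - 1) ∣ q - 1 := by
    simpa [hgcd] using Nat.gcd_dvd_gcd_of_dvd_left (q ^ m₂ - 1) hk_dvd
  have := Nat.dvd_gcd (Nat.gcd_dvd_left _ _) hdvd
  rwa [hk_cop.gcd_eq_one, Nat.dvd_one] at this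

namespace FiniteField

lemma natCast_card_units (R : Type*) [Ring R] (E : Type*) [Field E] [Fintype E] :
    (Nat.card Eˣ : R) = Fintype.card E - 1 := by
  rw [Nat.card_units, Nat.card_eq_fintype_card, Nat.cast_sub Fintype.card_pos, Nat.cast_one]

variable {K L : Type*} [Field K] [Field L] [Algebra K L] [Finite L]

lemma index_range_unitsMap_algebraMap :
    (Units.map (algebraMap K L : K →* L)).range.index = (Nat.card L - 1) / (Nat.card K - 1) := by
  have := Finite.of_injective _ (algebraMap K L).injective
  have hcard := (Units.map (algebraMap K L : K →* L)).range.index_mul_card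
  have hrange : Nat.card (Units.map (algebraMap K L : K →* L)).range = Nat.card Kˣ :=
    (Nat.card_congr
      (MonoidHom.ofInjective (Units.map_injective (algebraMap K L).injective)).toEquiv).symm
  rw [hrange, Nat.card_units, Nat.card_units] at hcard
  exact Nat.eq_div_of_mul_eq_left (by have := Finite.one_lt_card (α := K); omega) hcard

lemma surjective_coprod_unitsMap_algebraMap_pow_norm (M : Type*) [Field M] [Algebra L M]
    [Finite M] {e : ℕ} (he : ((Nat.card L - 1) / (Nat.card K - 1)).Coprime e) :
    Function.Surjective ((Units.map (algebraMap K L : K →* L)).coprod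
      ((powMonoidHom e).comp (Units.map (Algebra.norm L : M →* L)))) := by
  intro u
  obtain ⟨_, ⟨y, rfl⟩, w, hw⟩ :=
    Subgroup.exists_mem_mul_pow_of_coprime_index (S := (Units.map (algebraMap K L : K →* L)).range)
      (by rwa [index_range_unitsMap_algebraMap]) u
  obtain ⟨z, rfl⟩ := unitsMap_norm_surjective L M w
  exact ⟨(y, z), hw⟩

lemma sum_units_sum_units_addChar_mul_algebraMap_mul_norm_pow (M : Type*) [Field M] [Fintype M]
    [DecidableEq M] [Algebra L M] [Fintype K] [DecidableEq K] [Fintype L] [DecidableEq L]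
    {ψ : AddChar L ℂ} (hψ : ψ ≠ 1) {e : ℕ} (he : ((Nat.card L - 1) / (Nat.card K - 1)).Coprime e)
    {c : L} (hc : c ≠ 0) :
    ∑ z : Mˣ, ∑ y : Kˣ, ψ (c * (algebraMap K L y * Algebra.norm L (z : M) ^ e)) =
      -(Nat.card Kˣ * Nat.card Mˣ / Nat.card Lˣ : ℂ) := by
  have h := MonoidHom.sum_comp_of_surjective_eq_div
    (surjective_coprod_unitsMap_algebraMap_pow_norm (K := K) M he) fun v => ψ (c * v)
  rw [AddChar.sum_units_mul_eq_neg_one hψ hc, Fintype.sum_prod_type, sum_comm, Nat.card_prod] at h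
  simpa [mul_neg_one] using h

end FiniteField

lemma sum_units_sum_units_addChar_algebraMap_mul_eq_one {K L R : Type*} [Field K] [Fintype K]
    [DecidableEq K] [Field L] [Fintype L] [DecidableEq L] [Algebra K L] [CommRing R] [IsDomain R]
    {ψ : AddChar K R} (hψ : ψ ≠ 1) {ψ' : AddChar L R} (hψ' : ψ' ≠ 1) :
    ∑ v : Lˣ, ∑ z : Kˣ, ψ' (algebraMap K L z * v) * ψ z = 1 := by
  have hinner (z : Kˣ) : ∑ v : Lˣ, ψ' (algebraMap K L z * v) = -1 :=
    AddChar.sum_units_mul_eq_neg_one hψ' (by simp)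
  have hψsum : ∑ z : Kˣ, ψ z = -1 := by
    simpa using AddChar.sum_units_mul_eq_neg_one hψ one_ne_zero
  rw [sum_comm]
  simp_rw [← sum_mul, hinner, neg_one_mul, sum_neg_distrib, hψsum, neg_neg]

theorem stmt_15_general (q m m₁ m₂ : ℕ)
    (hgcd : Nat.gcd m₁ m₂ = 1)
    (hl : Nat.gcd m₁ (q - 1) = 1)
    (K F₁ F₂ F : Type) [Field K] [Field F₁] [Field F₂] [Field F]
    [Fintype K] [Fintype F₁] [Fintype F₂] [Fintype F]
    [DecidableEq K] [DecidableEq F₁] [DecidableEq F₂] [DecidableEq F]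
    [Algebra K F₁] [Algebra K F₂] [Algebra F₁ F] [Algebra F₂ F]
    (hK : Fintype.card K = q) (hF₁ : Fintype.card F₁ = q ^ m₁)
    (hF₂ : Fintype.card F₂ = q ^ m₂) (hF : Fintype.card F = q ^ m)
    (χ : AddChar K ℂ) (hχ : χ ≠ 1)
    (χ₁ : AddChar F₁ ℂ) (hχ₁ : χ₁ ≠ 1) (χ₂ : AddChar F₂ ℂ) (hχ₂ : χ₂ ≠ 1)
    (b : F₁ˣ) :
    ∑ x : Fˣ, ∑ y : Kˣ, ∑ z : Kˣ,
        χ₁ (algebraMap K F₁ (y : K) * (b : F₁) * Algebra.norm F₁ (x : F)) *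
          χ₂ (algebraMap K F₂ (z : K) * Algebra.norm F₂ (x : F)) * χ (z : K) =
      -(((q : ℂ) ^ m - 1) * ((q : ℂ) - 1)) / (((q : ℂ) ^ m₁ - 1) * ((q : ℂ) ^ m₂ - 1)) := by
  set N₁ : Fˣ →* F₁ˣ := Units.map (Algebra.norm F₁ : F →* F₁)
  set N₂ : Fˣ →* F₂ˣ := Units.map (Algebra.norm F₂ : F →* F₂)
  set A : F₁ˣ → ℂ := fun u => ∑ y : Kˣ, χ₁ (algebraMap K F₁ y * b * u)
  set B : F₂ˣ → ℂ := fun v => ∑ z : Kˣ, χ₂ (algebraMap K F₂ z * v) * χ z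
  have hcoprime : ((Nat.card F₁ - 1) / (Nat.card K - 1)).Coprime (q ^ m₂ - 1) := by
    rw [Nat.card_eq_fintype_card, Nat.card_eq_fintype_card, hF₁, hK]
    exact Nat.coprime_pow_sub_one_div_sub_one (hK ▸ Fintype.one_lt_card) hgcd hl
  have hA (u : F₁ˣ) : ∑ z, A (u * N₁ (z ^ (q ^ m₂ - 1))) =
      -(Nat.card Kˣ * Nat.card Fˣ / Nat.card F₁ˣ : ℂ) := by
    rw [← FiniteField.sum_units_sum_units_addChar_mul_algebraMap_mul_norm_pow F hχ₁ hcoprime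
      (b * u).ne_zero]
    refine sum_congr rfl fun z _ => sum_congr rfl fun y _ => congrArg χ₁ ?_
    simp only [N₁, map_pow, Units.val_mul, Units.val_pow_eq_pow_val, Units.coe_map]
    ring
  have hB : ∑ x, B (N₂ x) = Nat.card Fˣ / Nat.card F₂ˣ := by
    rw [MonoidHom.sum_comp_of_surjective_eq_div (FiniteField.unitsMap_norm_surjective F₂ F),
      sum_units_sum_units_addChar_algebraMap_mul_eq_one hχ hχ₂, mul_one]
  have key := card_mul_sum_mul_eq_of_forall_sum_eq N₁ N₂
    (fun z => by simp [← hF₂, ← Fintype.card_units]) A B hA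
  rw [hB] at key
  have hcast (E : Type) [Field E] [Fintype E] : (Fintype.card E - 1 : ℂ) = Nat.card Eˣ :=
    (FiniteField.natCast_card_units ℂ E).symm
  have hne (E : Type) [Field E] [Fintype E] : (Nat.card Eˣ : ℂ) ≠ 0 :=
    Nat.cast_ne_zero.2 Nat.card_pos.ne'
  subst hK
  rw [← Nat.cast_pow, ← Nat.cast_pow, ← Nat.cast_pow, ← hF, ← hF₁, ← hF₂, hcast, hcast, hcast,
    hcast]
  calc _ = ∑ x, A (N₁ x) * B (N₂ x) := by
        simp_rw [A, B, sum_mul_sum, mul_assoc]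
        rfl
    _ = _ := by
        field_simp [hne] at key ⊢
        linear_combination key

/-- For `m₁ ∣ m`, `m₂ ∣ m` with `gcd(m₁, m₂) = 1` and `gcd(m₁, q-1) = 1`, and `b ∈ F_{q^{m₁}}ˣ`,
`Ω(b) = ∑_{x ∈ F_{q^m}ˣ} ∑_{y,z ∈ F_qˣ} χ₁(y b N_{q^m/q^{m₁}}(x)) χ₂(z N_{q^m/q^{m₂}}(x)) χ(z)`
equals `-(q^m - 1)(q-1) / ((q^{m₁}-1)(q^{m₂}-1))`. -/
theorem stmt_15 (q m m₁ m₂ : ℕ) (hq : IsPrimePow q)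
    (hd₁ : m₁ ∣ m) (hd₂ : m₂ ∣ m) (hgcd : Nat.gcd m₁ m₂ = 1)
    (hl : Nat.gcd m₁ (q - 1) = 1) (hm : 0 < m)
    (K F₁ F₂ F : Type) [Field K] [Field F₁] [Field F₂] [Field F]
    [Fintype K] [Fintype F₁] [Fintype F₂] [Fintype F]
    [DecidableEq K] [DecidableEq F₁] [DecidableEq F₂] [DecidableEq F]
    [Algebra K F₁] [Algebra K F₂] [Algebra F₁ F] [Algebra F₂ F]
    (hK : Fintype.card K = q) (hF₁ : Fintype.card F₁ = q ^ m₁)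
    (hF₂ : Fintype.card F₂ = q ^ m₂) (hF : Fintype.card F = q ^ m)
    (χ : AddChar K ℂ) (hχ : χ ≠ 1)
    (χ₁ : AddChar F₁ ℂ) (hχ₁ : χ₁ ≠ 1) (χ₂ : AddChar F₂ ℂ) (hχ₂ : χ₂ ≠ 1)
    (b : F₁ˣ) :
    ∑ x : Fˣ, ∑ y : Kˣ, ∑ z : Kˣ,
        χ₁ (algebraMap K F₁ (y : K) * (b : F₁) * Algebra.norm F₁ (x : F)) *
          χ₂ (algebraMap K F₂ (z : K) * Algebra.norm F₂ (x : F)) * χ (z : K) =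
      -(((q : ℂ) ^ m - 1) * ((q : ℂ) - 1)) / (((q : ℂ) ^ m₁ - 1) * ((q : ℂ) ^ m₂ - 1)) :=
  stmt_15_general q m m₁ m₂ hgcd hl K F₁ F₂ F hK hF₁ hF₂ hF χ hχ χ₁ hχ₁ χ₂ hχ₂ b
end

section
/- Let q be a prime power and m, k positive integers. If an [n, k, d] linear code over F_q satisfies the Griesmer bound with equality in the sense that n = ∑_{i=0}^{k-1} ⌈d/qⁱ⌉, and the code has a single nonzero weight w = d, then with n = (q^m - 1)/(q^{m₂}-1) · (q^{m₂-1} - 1), k = m₁, and d = q^{m₁-1}(q-1)(q^m-1)(q^{m₂-1}-1)/((q^{m₁}-1)(q^{m₂}-1)), where m₁ | m, m₂ | m, gcd(m₁,m₂) = 1, m₂ > 1, the Griesmer bound n ≥ ∑_{i=0}^{k-1} ⌈d/qⁱ⌉ holds with equality. -/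
/-!
Since `gcd(q^{m₁}-1, q^{m₂}-1) = q^{gcd(m₁,m₂)}-1 = q-1` and `lcm(q^{m₁}-1, q^{m₂}-1)` divides
`q^m-1`, the product `(q^{m₁}-1)(q^{m₂}-1)` divides `(q-1)(q^m-1)`. Hence `d = q^{m₁-1}·c` for an
integer `c`, every `d/qⁱ` with `i < m₁` is an integer, and the Griesmer sum is the geometric sum
`c·(q^{m₁}-1)/(q-1)`, which equals `n`.
-/

theorem Nat.pow_sub_one_mul_pow_sub_one_dvd {a b m : ℕ} (q : ℕ) (hab : a.Coprime b)
    (ha : a ∣ m) (hb : b ∣ m) : (q ^ a - 1) * (q ^ b - 1) ∣ (q - 1) * (q ^ m - 1) := by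
  rw [← Nat.gcd_mul_lcm, Nat.pow_sub_one_gcd_pow_sub_one, hab.gcd_eq_one, pow_one]
  exact mul_dvd_mul_left _ (Nat.lcm_dvd (Nat.pow_sub_one_dvd_pow_sub_one q ha)
    (Nat.pow_sub_one_dvd_pow_sub_one q hb))

theorem sum_range_ceil_pow_mul_div_pow {K : Type*} [Field K] [LinearOrder K]
    [IsStrictOrderedRing K] [FloorRing K] {q : ℤ} (hq : q ≠ 0) (c : ℤ) (k : ℕ) :
    ∑ i ∈ Finset.range k, (⌈(q : K) ^ (k - 1) * c / (q : K) ^ i⌉ : K) =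
      c * ∑ i ∈ Finset.range k, (q : K) ^ i := by
  rw [Finset.mul_sum, ← Finset.sum_range_reflect]
  refine Finset.sum_congr rfl fun i hi => ?_
  have hterm : (q : K) ^ (k - 1) * c / (q : K) ^ (k - 1 - i) = ((q ^ i * c : ℤ) : K) := by
    have hsplit : (q : K) ^ (k - 1) = q ^ (k - 1 - i) * q ^ i := by
      rw [← pow_add, Nat.sub_add_cancel (Nat.le_sub_one_of_lt (Finset.mem_range.mp hi))]
    rw [div_eq_iff (pow_ne_zero _ (Int.cast_ne_zero.mpr hq)), hsplit]
    push_cast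
    ring
  rw [hterm, Int.ceil_intCast]
  push_cast
  ring

/-- The one-weight code of Section 4.1 (case `gcd(m₁,m₂) = 1`, `m₂ > 1`) meets the Griesmer
bound with equality: with `n = (q^m-1)/(q^{m₂}-1)·(q^{m₂-1}-1)`, `k = m₁`, and
`d = q^{m₁-1}(q-1)(q^m-1)(q^{m₂-1}-1)/((q^{m₁}-1)(q^{m₂}-1))`, one has
`∑_{i=0}^{m₁-1} ⌈d/qⁱ⌉ = n`. -/
theorem stmt_18 (q m m₁ m₂ : ℕ) (hq : IsPrimePow q)
    (hd₁ : m₁ ∣ m) (hd₂ : m₂ ∣ m) (hgcd : Nat.gcd m₁ m₂ = 1) (hm₂ : 1 < m₂) (hm₁ : 0 < m₁)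
    (n d : ℚ)
    (hn : n = ((q : ℚ) ^ m - 1) / ((q : ℚ) ^ m₂ - 1) * ((q : ℚ) ^ (m₂ - 1) - 1))
    (hd : d = (q : ℚ) ^ (m₁ - 1) * ((q : ℚ) - 1) * ((q : ℚ) ^ m - 1) *
        ((q : ℚ) ^ (m₂ - 1) - 1) / (((q : ℚ) ^ m₁ - 1) * ((q : ℚ) ^ m₂ - 1))) :
    (∑ i ∈ Finset.range m₁, (⌈d / (q : ℚ) ^ i⌉ : ℚ)) = n := by
  have hq1 : (1 : ℚ) < q := by exact_mod_cast hq.one_lt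
  have hpow : ∀ {e}, e ≠ 0 → (q : ℚ) ^ e - 1 ≠ 0 := fun he =>
    (sub_pos.2 (one_lt_pow₀ hq1 he)).ne'
  obtain ⟨N, hN⟩ := Nat.pow_sub_one_mul_pow_sub_one_dvd q hgcd hd₁ hd₂
  have hNQ : ((q : ℚ) - 1) * (q ^ m - 1) = (q ^ m₁ - 1) * (q ^ m₂ - 1) * N := by
    have h := congrArg (Nat.cast : ℕ → ℚ) hN
    push_cast [Nat.one_le_pow _ _ hq.pos, hq.one_lt.le] at h
    exact h
  have hd' : d = (q : ℚ) ^ (m₁ - 1) * ((N * ((q : ℤ) ^ (m₂ - 1) - 1) : ℤ) : ℚ) := by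
    rw [hd, div_eq_iff (mul_ne_zero (hpow hm₁.ne') (hpow (by omega)))]
    push_cast
    linear_combination (q : ℚ) ^ (m₁ - 1) * ((q : ℚ) ^ (m₂ - 1) - 1) * hNQ
  have hsum := sum_range_ceil_pow_mul_div_pow (K := ℚ) (q := (q : ℤ))
    (by exact_mod_cast hq.ne_zero) (N * ((q : ℤ) ^ (m₂ - 1) - 1)) m₁
  simp only [Int.cast_natCast] at hsum
  have h₀ : (q : ℚ) - 1 ≠ 0 := sub_ne_zero.2 hq1.ne'
  have h₂ := hpow (e := m₂) (by omega)
  rw [hd', hsum, geom_sum_eq hq1.ne', hn]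
  push_cast
  field_simp
  linear_combination (1 - (q : ℚ) ^ (m₂ - 1)) * hNQ
end
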